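/- Let E be a finite-dimensional real inner product space, Φ a finite (Borel) measure on ℝ³, and f : ℝ³ → (E →ₗ[ℝ] E) a measurable map such that every f p is self-adjoint and positive semidefinite (0 ≤ ⟪w, f p w⟫ for all w) and ‖f p‖ ≤ 1 for all p. Then the kernel B(x, y) = ∫ cos ⟪p, y − x⟫ · f p dΦ(p) is positive semidefinite: for every n, every family of points x : Fin n → ℝ³ and vectors v : Fin n → E, one has 0 ≤ ∑ i, ∑ j, ∫ cos ⟪p, x j − x i⟫ * ⟪v i, f p (v j)⟫ dΦ(p). (This is the direct half of the correspondence in Theorem 1: every such spectral integral is a valid two-point correlation tensor of a homogeneous field invariant under p ↦ −p.) -/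

import Mathlib

/-!
Writing `aᵢ = ⟪p, xᵢ⟫`, the addition formula `cos (aⱼ - aᵢ) = cos aᵢ cos aⱼ + sin aᵢ sin aⱼ`
splits the integrand at each `p` into `⟪w, f p w⟫ + ⟪w', f p w'⟫` with `w = ∑ cos aᵢ • vᵢ` and
`w' = ∑ sin aᵢ • vᵢ`, which is nonnegative. The operator bound makes every term integrable
against the finite measure, so the sum of integrals is the integral of this nonnegative sum.
-/

open MeasureTheory RealInnerProductSpace

section QuadraticForm

variable {E ι : Type*} [NormedAddCommGroup E] [InnerProductSpace ℝ E] [Fintype ι]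

theorem inner_sum_smul_map_sum_smul (T : E →ₗ[ℝ] E) (c : ι → ℝ) (v : ι → E) :
    ⟪∑ i, c i • v i, T (∑ j, c j • v j)⟫ = ∑ i, ∑ j, c i * c j * ⟪v i, T (v j)⟫ := by
  rw [sum_inner]
  refine Finset.sum_congr rfl fun i _ => ?_
  rw [map_sum, inner_sum]
  refine Finset.sum_congr rfl fun j _ => ?_
  rw [map_smul, real_inner_smul_left, real_inner_smul_right]
  ring

theorem sum_sum_mul_inner_nonneg {T : E →ₗ[ℝ] E} (hT : ∀ w, 0 ≤ ⟪w, T w⟫)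
    (c : ι → ℝ) (v : ι → E) : 0 ≤ ∑ i, ∑ j, c i * c j * ⟪v i, T (v j)⟫ :=
  inner_sum_smul_map_sum_smul T c v ▸ hT _

variable {F : Type*} [NormedAddCommGroup F] [InnerProductSpace ℝ F]

theorem sum_sum_cos_inner_sub_mul_inner_nonneg {T : E →ₗ[ℝ] E} (hT : ∀ w, 0 ≤ ⟪w, T w⟫)
    (p : F) (x : ι → F) (v : ι → E) :
    0 ≤ ∑ i, ∑ j, Real.cos ⟪p, x j - x i⟫ * ⟪v i, T (v j)⟫ := by
  have hsplit : ∀ i j, Real.cos ⟪p, x j - x i⟫ * ⟪v i, T (v j)⟫ =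
      Real.cos ⟪p, x i⟫ * Real.cos ⟪p, x j⟫ * ⟪v i, T (v j)⟫ +
        Real.sin ⟪p, x i⟫ * Real.sin ⟪p, x j⟫ * ⟪v i, T (v j)⟫ := by
    intro i j
    rw [inner_sub_right, Real.cos_sub]
    ring
  simp only [hsplit, Finset.sum_add_distrib]
  exact add_nonneg (sum_sum_mul_inner_nonneg hT _ v) (sum_sum_mul_inner_nonneg hT _ v)

end QuadraticForm

section Integrability

variable {E F : Type*} [NormedAddCommGroup E] [InnerProductSpace ℝ E]
  [NormedAddCommGroup F] [InnerProductSpace ℝ F] [MeasurableSpace F] [OpensMeasurableSpace F]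

theorem integrable_cos_inner_mul_inner (Φ : Measure F) [IsFiniteMeasure Φ] (f : F → E →ₗ[ℝ] E)
    {u w : E} (hmeas : Measurable fun p => ⟪u, f p w⟫) (hbound : ∀ p, ‖f p w‖ ≤ ‖w‖) (a : F) :
    Integrable (fun p => Real.cos ⟪p, a⟫ * ⟪u, f p w⟫) Φ := by
  have hm : Measurable fun p => Real.cos ⟪p, a⟫ * ⟪u, f p w⟫ :=
    (Real.measurable_cos.comp (continuous_id.inner continuous_const).measurable).mul hmeas
  refine (integrable_const (‖u‖ * ‖w‖)).mono' hm.aestronglyMeasurable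
    (Filter.Eventually.of_forall fun p => ?_)
  calc ‖Real.cos ⟪p, a⟫ * ⟪u, f p w⟫‖ = |Real.cos ⟪p, a⟫| * |⟪u, f p w⟫| := by
        rw [Real.norm_eq_abs, abs_mul]
    _ ≤ 1 * (‖u‖ * ‖f p w‖) :=
        mul_le_mul (Real.abs_cos_le_one _) (abs_real_inner_le_norm _ _) (abs_nonneg _)
          zero_le_one
    _ ≤ ‖u‖ * ‖w‖ := by
        rw [one_mul]
        exact mul_le_mul_of_nonneg_left (hbound p) (norm_nonneg u)

end Integrability

theorem spectral_kernel_posSemidef_general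
    {E : Type*} [NormedAddCommGroup E] [InnerProductSpace ℝ E]
    (Φ : Measure (EuclideanSpace ℝ (Fin 3))) [IsFiniteMeasure Φ]
    (f : EuclideanSpace ℝ (Fin 3) → (E →ₗ[ℝ] E))
    (hmeas : ∀ u w : E, Measurable fun p => ⟪u, f p w⟫)
    (hpos : ∀ p, ∀ w : E, 0 ≤ ⟪w, f p w⟫)
    (hbound : ∀ p, ∀ w : E, ‖f p w‖ ≤ ‖w‖) :
    ∀ (n : ℕ) (x : Fin n → EuclideanSpace ℝ (Fin 3)) (v : Fin n → E),
      0 ≤ ∑ i, ∑ j, ∫ p, Real.cos ⟪p, x j - x i⟫ * ⟪v i, f p (v j)⟫ ∂Φ := by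
  intro n x v
  have hint : ∀ i j, Integrable (fun p => Real.cos ⟪p, x j - x i⟫ * ⟪v i, f p (v j)⟫) Φ :=
    fun i j => integrable_cos_inner_mul_inner Φ f (hmeas _ _) (fun p => hbound p _) _
  have hswap : ∑ i, ∑ j, ∫ p, Real.cos ⟪p, x j - x i⟫ * ⟪v i, f p (v j)⟫ ∂Φ =
      ∫ p, ∑ i, ∑ j, Real.cos ⟪p, x j - x i⟫ * ⟪v i, f p (v j)⟫ ∂Φ := by
    rw [integral_finsetSum _ fun i _ => integrable_finsetSum _ fun j _ => hint i j]
    exact Finset.sum_congr rfl fun i _ => (integral_finsetSum _ fun j _ => hint i j).symm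
  rw [hswap]
  exact integral_nonneg fun p => sum_sum_cos_inner_sub_mul_inner_nonneg (hpos p) p x v

/-- for a finite measure `Φ` on `ℝ³` and a measurable family `f p` of
self-adjoint, positive semidefinite operators of norm at most one, the kernel
`B(x, y) = ∫ cos ⟪p, y − x⟫ · f p dΦ(p)` is positive semidefinite. -/
theorem spectral_kernel_posSemidef
    {E : Type*} [NormedAddCommGroup E] [InnerProductSpace ℝ E] [FiniteDimensional ℝ E]
    (Φ : Measure (EuclideanSpace ℝ (Fin 3))) [IsFiniteMeasure Φ]
    (f : EuclideanSpace ℝ (Fin 3) → (E →ₗ[ℝ] E))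
    (hmeas : ∀ u w : E, Measurable fun p => ⟪u, f p w⟫)
    (hsymm : ∀ p, ∀ u w : E, ⟪f p u, w⟫ = ⟪u, f p w⟫)
    (hpos : ∀ p, ∀ w : E, 0 ≤ ⟪w, f p w⟫)
    (hbound : ∀ p, ∀ w : E, ‖f p w‖ ≤ ‖w‖) :
    ∀ (n : ℕ) (x : Fin n → EuclideanSpace ℝ (Fin 3)) (v : Fin n → E),
      0 ≤ ∑ i, ∑ j, ∫ p, Real.cos ⟪p, x j - x i⟫ * ⟪v i, f p (v j)⟫ ∂Φ :=
  spectral_kernel_posSemidef_general Φ f hmeas hpos hbound
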